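/- The map L₅(F) = −F₅(F) is an involutive linear isometry of 𝒩 = {F ∈ (v𝔽)′ : F = F₄(F)} and of 𝒩̃ = {F ∈ (v𝔽)′ : F = −F₄(F)}, commuting with the action on 𝔽 of every linear isometry A of V with A∘φ = φ∘A and Aξ = ξ, and it yields the orthogonal decompositions 𝒩 = 𝒬𝒮𝔽 ⊕ 𝒬𝒦𝔽 and 𝒩̃ = 𝔽₆ ⊕ 𝔽₇, where 𝒬𝒮𝔽 = {F : F = F₄(F) = F₅(F)}, 𝒬𝒦𝔽 = {F : F = F₄(F) = −F₅(F)}, 𝔽₆ = {F : F = −F₄(F) = F₅(F)}, and 𝔽₇ = {F : F = −F₄(F) = −F₅(F)} (all subspaces of (v𝔽)′). The components of F ∈ 𝒩 in 𝒬𝒮𝔽 and 𝒬𝒦𝔽 are (1/4){F₂(F)+F₄(F)+F₅(F)+F₆(F)} and (1/4){F₂(F)+F₄(F)−F₅(F)−F₆(F)}, and the components of F ∈ 𝒩̃ in 𝔽₆ and 𝔽₇ are (1/4){F₂(F)−F₄(F)+F₅(F)−F₆(F)} and (1/4){F₂(F)−F₄(F)−F₅(F)+F₆(F)}. -/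

import Mathlib

open scoped BigOperators RealInnerProductSpace

noncomputable section

variable {V : Type*} [NormedAddCommGroup V] [InnerProductSpace ℝ V]

/-- A map `V → V → V → ℝ` linear in each of its three arguments. -/
def Trilinear (F : V → V → V → ℝ) : Prop :=
  (∀ y z, IsLinearMap ℝ fun x => F x y z) ∧
  (∀ x z, IsLinearMap ℝ fun y => F x y z) ∧
  (∀ x y, IsLinearMap ℝ fun z => F x y z)

/-- Almost contact metric structure `(φ, ξ, η, g)` on `V` with `dim V = 2n+1`. -/
def ACM (n : ℕ) (φ : V →ₗ[ℝ] V) (ξ : V) (η : V →ₗ[ℝ] ℝ) : Prop :=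
  Module.finrank ℝ V = 2 * n + 1 ∧
  (∀ x, φ (φ x) = -x + η x • ξ) ∧
  φ ξ = 0 ∧
  (∀ x, η (φ x) = 0) ∧
  ⟪ξ, ξ⟫ = 1 ∧
  (∀ x y, ⟪φ x, φ y⟫ = ⟪x, y⟫ - η x * η y)

/-- Membership in the space `𝔽` of trilinear forms with the symmetries (1). -/
def InF (φ : V →ₗ[ℝ] V) (ξ : V) (η : V →ₗ[ℝ] ℝ) (F : V → V → V → ℝ) : Prop :=
  Trilinear F ∧
  (∀ x y z, F x y z = -F x z y) ∧
  (∀ x y z, F x y z = -F x (φ y) (φ z) + η y * F x ξ z + η z * F x y ξ)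

/-- `h x = -φ²x`. -/
def hMap (φ : V →ₗ[ℝ] V) (x : V) : V := -φ (φ x)

/-- `hF(x,y,z) = F(hx,hy,hz)`. -/
def hF (φ : V →ₗ[ℝ] V) (F : V → V → V → ℝ) : V → V → V → ℝ :=
  fun x y z => F (hMap φ x) (hMap φ y) (hMap φ z)

def F1 (ξ : V) (η : V →ₗ[ℝ] ℝ) (F : V → V → V → ℝ) : V → V → V → ℝ :=
  fun x y z => η x * F ξ y z

def F2 (ξ : V) (η : V →ₗ[ℝ] ℝ) (F : V → V → V → ℝ) : V → V → V → ℝ :=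
  fun x y z => η y * F x ξ z - η z * F x ξ y

def F3 (ξ : V) (η : V →ₗ[ℝ] ℝ) (F : V → V → V → ℝ) : V → V → V → ℝ :=
  fun x y z => η x * η y * F ξ ξ z - η x * η z * F ξ ξ y

def F4 (φ : V →ₗ[ℝ] V) (ξ : V) (η : V →ₗ[ℝ] ℝ) (F : V → V → V → ℝ) : V → V → V → ℝ :=
  fun x y z => η y * F (φ x) ξ (φ z) - η z * F (φ x) ξ (φ y)

def F5 (ξ : V) (η : V →ₗ[ℝ] ℝ) (F : V → V → V → ℝ) : V → V → V → ℝ :=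
  fun x y z => η y * F z ξ x - η z * F y ξ x

def F6 (φ : V →ₗ[ℝ] V) (ξ : V) (η : V →ₗ[ℝ] ℝ) (F : V → V → V → ℝ) : V → V → V → ℝ :=
  fun x y z => η y * F (φ z) ξ (φ x) - η z * F (φ y) ξ (φ x)

/-- `f(F)(z) = Σᵢ F(eᵢ, eᵢ, z)`. -/
def fTr {ι : Type*} [Fintype ι] (e : OrthonormalBasis ι ℝ V) (F : V → V → V → ℝ) (z : V) : ℝ :=
  ∑ i, F (e i) (e i) z

/-- `f*(F)(z) = Σᵢ F(eᵢ, φ eᵢ, z)`. -/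
def fTrStar {ι : Type*} [Fintype ι] (φ : V →ₗ[ℝ] V) (e : OrthonormalBasis ι ℝ V)
    (F : V → V → V → ℝ) (z : V) : ℝ :=
  ∑ i, F (e i) (φ (e i)) z

/-- The inner product on `𝔽`: `⟨F,G⟩ = Σ_{i,j,k} F(eᵢ,eⱼ,e_k) G(eᵢ,eⱼ,e_k)`. -/
def innerF {ι : Type*} [Fintype ι] (e : OrthonormalBasis ι ℝ V) (F G : V → V → V → ℝ) : ℝ :=
  ∑ i, ∑ j, ∑ k, F (e i) (e j) (e k) * G (e i) (e j) (e k)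

def F7 (n : ℕ) {ι : Type*} [Fintype ι] (e : OrthonormalBasis ι ℝ V) (ξ : V) (η : V →ₗ[ℝ] ℝ)
    (F : V → V → V → ℝ) : V → V → V → ℝ :=
  fun x y z => (1 / (2 * (n : ℝ))) * fTr e F ξ * (η z * ⟪x, y⟫ - η y * ⟪x, z⟫)

def F8 (n : ℕ) (φ : V →ₗ[ℝ] V) {ι : Type*} [Fintype ι] (e : OrthonormalBasis ι ℝ V) (ξ : V)
    (η : V →ₗ[ℝ] ℝ) (F : V → V → V → ℝ) : V → V → V → ℝ :=
  fun x y z => -(1 / (2 * (n : ℝ))) * fTrStar φ e F ξ * (η z * ⟪x, φ y⟫ - η y * ⟪x, φ z⟫)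

def F9 (n : ℕ) (φ : V →ₗ[ℝ] V) {ι : Type*} [Fintype ι] (e : OrthonormalBasis ι ℝ V)
    (F : V → V → V → ℝ) : V → V → V → ℝ :=
  fun x y z => (1 / (2 * ((n : ℝ) - 1))) *
    (⟪hMap φ x, hMap φ y⟫ * fTr e F z - ⟪hMap φ x, hMap φ z⟫ * fTr e F y
      - ⟪x, φ y⟫ * fTr e F (φ z) + ⟪x, φ z⟫ * fTr e F (φ y))

def F10 (φ : V →ₗ[ℝ] V) (F : V → V → V → ℝ) : V → V → V → ℝ :=
  fun x y z => (1 / 2) * (F x y z + F (φ x) (φ y) z)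

def F11 (φ : V →ₗ[ℝ] V) (F : V → V → V → ℝ) : V → V → V → ℝ :=
  fun x y z => (1 / 6) * (F x y z + F y z x + F z x y
    - F (φ x) (φ y) z - F (φ y) (φ z) x - F (φ z) (φ x) y)

def F12 (φ : V →ₗ[ℝ] V) (F : V → V → V → ℝ) : V → V → V → ℝ :=
  fun x y z => (1 / 2) * (F x y z - F (φ x) (φ y) z)

/-- The action of a linear isometry `A` of `V` on trilinear forms:
`(A·F)(x,y,z) = F(A⁻¹x, A⁻¹y, A⁻¹z)`. -/
def actA (A : V ≃ₗᵢ[ℝ] V) (F : V → V → V → ℝ) : V → V → V → ℝ :=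
  fun x y z => F (A.symm x) (A.symm y) (A.symm z)

def L1 (ξ : V) (η : V →ₗ[ℝ] ℝ) (F : V → V → V → ℝ) : V → V → V → ℝ :=
  fun x y z => F x y z - 2 * F3 ξ η F x y z

def L2 (ξ : V) (η : V →ₗ[ℝ] ℝ) (F : V → V → V → ℝ) : V → V → V → ℝ :=
  fun x y z => F x y z - 2 * (F1 ξ η F x y z + F2 ξ η F x y z)

def L3 (ξ : V) (η : V →ₗ[ℝ] ℝ) (F : V → V → V → ℝ) : V → V → V → ℝ :=
  fun x y z => F2 ξ η F x y z - F1 ξ η F x y z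

def L4 (φ : V →ₗ[ℝ] V) (ξ : V) (η : V →ₗ[ℝ] ℝ) (F : V → V → V → ℝ) : V → V → V → ℝ :=
  fun x y z => -F4 φ ξ η F x y z

def L5 (ξ : V) (η : V →ₗ[ℝ] ℝ) (F : V → V → V → ℝ) : V → V → V → ℝ :=
  fun x y z => -F5 ξ η F x y z

def L6 (n : ℕ) {ι : Type*} [Fintype ι] (e : OrthonormalBasis ι ℝ V) (ξ : V) (η : V →ₗ[ℝ] ℝ)
    (F : V → V → V → ℝ) : V → V → V → ℝ :=
  fun x y z => F x y z - 2 * F7 n e ξ η F x y z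

def L7 (n : ℕ) (φ : V →ₗ[ℝ] V) {ι : Type*} [Fintype ι] (e : OrthonormalBasis ι ℝ V) (ξ : V)
    (η : V →ₗ[ℝ] ℝ) (F : V → V → V → ℝ) : V → V → V → ℝ :=
  fun x y z => F x y z - 2 * F8 n φ e ξ η F x y z

/-- The subspace `𝔽₁ = {F ∈ 𝔽 : F = F₃(F)}`. -/
def MemF1sub (φ : V →ₗ[ℝ] V) (ξ : V) (η : V →ₗ[ℝ] ℝ) (F : V → V → V → ℝ) : Prop :=
  InF φ ξ η F ∧ F = F3 ξ η F

/-- The subspace `v𝔽 = {F ∈ 𝔽 : hF = 0, ω(F) = 0}`. -/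
def MemVF (φ : V →ₗ[ℝ] V) (ξ : V) (η : V →ₗ[ℝ] ℝ) (F : V → V → V → ℝ) : Prop :=
  InF φ ξ η F ∧ hF φ F = 0 ∧ ∀ z, F ξ ξ z = 0

/-- The subspace `h𝔽 = {F ∈ 𝔽 : F₁(F) = F₂(F) = 0}`. -/
def MemHF (φ : V →ₗ[ℝ] V) (ξ : V) (η : V →ₗ[ℝ] ℝ) (F : V → V → V → ℝ) : Prop :=
  InF φ ξ η F ∧ F1 ξ η F = 0 ∧ F2 ξ η F = 0

/-- The subspace `(v𝔽)′ = {F ∈ 𝔽 : hF = 0, F(ξ,·,·) = 0}`. -/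
def MemVF' (φ : V →ₗ[ℝ] V) (ξ : V) (η : V →ₗ[ℝ] ℝ) (F : V → V → V → ℝ) : Prop :=
  InF φ ξ η F ∧ hF φ F = 0 ∧ ∀ y z, F ξ y z = 0

/-- The subspace `𝔽₈ = {F ∈ 𝔽 : hF = 0, F(·,·,ξ) = 0}`. -/
def MemF8sub (φ : V →ₗ[ℝ] V) (ξ : V) (η : V →ₗ[ℝ] ℝ) (F : V → V → V → ℝ) : Prop :=
  InF φ ξ η F ∧ hF φ F = 0 ∧ ∀ x y, F x y ξ = 0

/-- The subspace `𝒩 = {F ∈ (v𝔽)′ : F = F₄(F)}`. -/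
def MemN (φ : V →ₗ[ℝ] V) (ξ : V) (η : V →ₗ[ℝ] ℝ) (F : V → V → V → ℝ) : Prop :=
  MemVF' φ ξ η F ∧ F = F4 φ ξ η F

/-- The subspace `𝒩̃ = {F ∈ (v𝔽)′ : F = -F₄(F)}`. -/
def MemNt (φ : V →ₗ[ℝ] V) (ξ : V) (η : V →ₗ[ℝ] ℝ) (F : V → V → V → ℝ) : Prop :=
  MemVF' φ ξ η F ∧ F = -F4 φ ξ η F

/-- The subspace `𝒬𝒮𝔽 = {F ∈ (v𝔽)′ : F = F₄(F) = F₅(F)}`. -/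
def MemQS (φ : V →ₗ[ℝ] V) (ξ : V) (η : V →ₗ[ℝ] ℝ) (F : V → V → V → ℝ) : Prop :=
  MemVF' φ ξ η F ∧ F = F4 φ ξ η F ∧ F = F5 ξ η F

/-- The subspace `𝒬𝒦𝔽 = {F ∈ (v𝔽)′ : F = F₄(F) = -F₅(F)}`. -/
def MemQK (φ : V →ₗ[ℝ] V) (ξ : V) (η : V →ₗ[ℝ] ℝ) (F : V → V → V → ℝ) : Prop :=
  MemVF' φ ξ η F ∧ F = F4 φ ξ η F ∧ F = -F5 ξ η F

/-- The subspace `𝔽₆ = {F ∈ (v𝔽)′ : F = -F₄(F) = F₅(F)}`. -/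
def MemF6sub (φ : V →ₗ[ℝ] V) (ξ : V) (η : V →ₗ[ℝ] ℝ) (F : V → V → V → ℝ) : Prop :=
  MemVF' φ ξ η F ∧ F = -F4 φ ξ η F ∧ F = F5 ξ η F

/-- The subspace `𝔽₇ = {F ∈ (v𝔽)′ : F = -F₄(F) = -F₅(F)}`. -/
def MemF7sub (φ : V →ₗ[ℝ] V) (ξ : V) (η : V →ₗ[ℝ] ℝ) (F : V → V → V → ℝ) : Prop :=
  MemVF' φ ξ η F ∧ F = -F4 φ ξ η F ∧ F = -F5 ξ η F

/-- The subspace `𝔽₂ = {F ∈ 𝔽 : F = F₇(F)}`. -/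
def MemF2sub (n : ℕ) {ι : Type*} [Fintype ι] (e : OrthonormalBasis ι ℝ V) (φ : V →ₗ[ℝ] V)
    (ξ : V) (η : V →ₗ[ℝ] ℝ) (F : V → V → V → ℝ) : Prop :=
  InF φ ξ η F ∧ F = F7 n e ξ η F

/-- The subspace `𝔽₃ = {F ∈ 𝔽 : F = F₈(F)}`. -/
def MemF3sub (n : ℕ) {ι : Type*} [Fintype ι] (e : OrthonormalBasis ι ℝ V) (φ : V →ₗ[ℝ] V)
    (ξ : V) (η : V →ₗ[ℝ] ℝ) (F : V → V → V → ℝ) : Prop :=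
  InF φ ξ η F ∧ F = F8 n φ e ξ η F

/-- The subspace `𝔽₄ = {F ∈ 𝔽 : F = F₄(F) = F₅(F), f(F)(ξ) = 0}`. -/
def MemF4sub (n : ℕ) {ι : Type*} [Fintype ι] (e : OrthonormalBasis ι ℝ V) (φ : V →ₗ[ℝ] V)
    (ξ : V) (η : V →ₗ[ℝ] ℝ) (F : V → V → V → ℝ) : Prop :=
  InF φ ξ η F ∧ F = F4 φ ξ η F ∧ F = F5 ξ η F ∧ fTr e F ξ = 0

/-- The subspace `𝔽₅ = {F ∈ 𝔽 : F = F₄(F) = -F₅(F), f*(F)(ξ) = 0}`. -/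
def MemF5sub (n : ℕ) {ι : Type*} [Fintype ι] (e : OrthonormalBasis ι ℝ V) (φ : V →ₗ[ℝ] V)
    (ξ : V) (η : V →ₗ[ℝ] ℝ) (F : V → V → V → ℝ) : Prop :=
  InF φ ξ η F ∧ F = F4 φ ξ η F ∧ F = -F5 ξ η F ∧ fTrStar φ e F ξ = 0

/-- The subspace `𝔽₄ = {F ∈ (v𝔽)′ : F = F₄(F) = F₅(F), f(F)(ξ) = 0}`. -/
def MemF4sub' (n : ℕ) {ι : Type*} [Fintype ι] (e : OrthonormalBasis ι ℝ V) (φ : V →ₗ[ℝ] V)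
    (ξ : V) (η : V →ₗ[ℝ] ℝ) (F : V → V → V → ℝ) : Prop :=
  MemVF' φ ξ η F ∧ F = F4 φ ξ η F ∧ F = F5 ξ η F ∧ fTr e F ξ = 0

/-- The subspace `𝔽₅ = {F ∈ (v𝔽)′ : F = F₄(F) = -F₅(F), f*(F)(ξ) = 0}`. -/
def MemF5sub' (n : ℕ) {ι : Type*} [Fintype ι] (e : OrthonormalBasis ι ℝ V) (φ : V →ₗ[ℝ] V)
    (ξ : V) (η : V →ₗ[ℝ] ℝ) (F : V → V → V → ℝ) : Prop :=
  MemVF' φ ξ η F ∧ F = F4 φ ξ η F ∧ F = -F5 ξ η F ∧ fTrStar φ e F ξ = 0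

/-- The subspace `𝔽₉ = {F ∈ 𝔽 : F = hF = F₉(F)}`. -/
def MemF9sub (n : ℕ) {ι : Type*} [Fintype ι] (e : OrthonormalBasis ι ℝ V) (φ : V →ₗ[ℝ] V)
    (ξ : V) (η : V →ₗ[ℝ] ℝ) (F : V → V → V → ℝ) : Prop :=
  InF φ ξ η F ∧ F = hF φ F ∧ F = F9 n φ e F

/-- The subspace `𝔽₁₀ = {F ∈ 𝔽 : F = hF = F₁₀(F) - F₉(F)}`. -/
def MemF10sub (n : ℕ) {ι : Type*} [Fintype ι] (e : OrthonormalBasis ι ℝ V) (φ : V →ₗ[ℝ] V)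
    (ξ : V) (η : V →ₗ[ℝ] ℝ) (F : V → V → V → ℝ) : Prop :=
  InF φ ξ η F ∧ F = hF φ F ∧ F = F10 φ F - F9 n φ e F

/-- The subspace `𝔽₁₁ = {F ∈ 𝔽 : F = hF = F₁₁(F)}`. -/
def MemF11sub (φ : V →ₗ[ℝ] V) (ξ : V) (η : V →ₗ[ℝ] ℝ) (F : V → V → V → ℝ) : Prop :=
  InF φ ξ η F ∧ F = hF φ F ∧ F = F11 φ F

/-- The subspace `𝔽₁₂ = {F ∈ 𝔽 : F = hF = F₁₂(F) - F₁₁(F)}`. -/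
def MemF12sub (φ : V →ₗ[ℝ] V) (ξ : V) (η : V →ₗ[ℝ] ℝ) (F : V → V → V → ℝ) : Prop :=
  InF φ ξ η F ∧ F = hF φ F ∧ F = F12 φ F - F11 φ F

/-!
An element `F` of `(v𝔽)′` is determined by the bilinear form `B(x, z) = F(x, ξ, z)`:
`F(x, y, z) = η(y) B(x, z) - η(z) B(x, y)`, and `F₅` acts on `B` by transposition. Hence `F₅`
is a linear involution of `(v𝔽)′`; it commutes with the condition `F₄(F) = ±F`, so it preserves
`𝒩` and `𝒩̃`, and the four subspaces are the `±1`-eigenspaces of `F₅` in them, with projections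
`(F ± F₅ F) / 2`. In terms of `B` the inner product of `𝔽` is `2 ∑ B_F(eᵢ, eₖ) B_G(eᵢ, eₖ)`,
which transposition preserves; the `±1`-eigenspaces of an isometric involution are orthogonal.
-/

section Involution

variable {W : Type*} [AddCommGroup W] [Module ℝ W] {T : Module.End ℝ W} {S : Submodule ℝ W}
  {x : W}

theorem eq_iff_mem_eigenspace_one (T : Module.End ℝ W) (x : W) :
    x = T x ↔ x ∈ T.eigenspace 1 := by
  rw [Module.End.mem_eigenspace_iff, one_smul, eq_comm]

theorem eq_neg_iff_mem_eigenspace_neg_one (T : Module.End ℝ W) (x : W) :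
    x = -T x ↔ x ∈ T.eigenspace (-1) := by
  rw [Module.End.mem_eigenspace_iff, neg_one_smul, eq_comm, neg_eq_iff_eq_neg]

theorem half_add_mem_eigenspace_one (hS : ∀ y ∈ S, T y ∈ S) (hx : x ∈ S) (hTx : T (T x) = x) :
    (1 / 2 : ℝ) • (x + T x) ∈ S ⊓ T.eigenspace 1 :=
  Submodule.mem_inf.2 ⟨S.smul_mem _ (S.add_mem hx (hS x hx)), by
    rw [Module.End.mem_eigenspace_iff, map_smul, map_add, hTx, add_comm, one_smul]⟩

theorem half_sub_mem_eigenspace_neg_one (hS : ∀ y ∈ S, T y ∈ S) (hx : x ∈ S)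
    (hTx : T (T x) = x) : (1 / 2 : ℝ) • (x - T x) ∈ S ⊓ T.eigenspace (-1) :=
  Submodule.mem_inf.2 ⟨S.smul_mem _ (S.sub_mem hx (hS x hx)), by
    rw [Module.End.mem_eigenspace_iff, map_smul, map_sub, hTx]; module⟩

theorem existsUnique_add_mem_eigenspaces (hS : ∀ y ∈ S, T y ∈ S) (hx : x ∈ S)
    (hTx : T (T x) = x) :
    ∃! p : W × W, p.1 ∈ S ⊓ T.eigenspace 1 ∧ p.2 ∈ S ⊓ T.eigenspace (-1) ∧ x = p.1 + p.2 := by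
  refine ⟨((1 / 2 : ℝ) • (x + T x), (1 / 2 : ℝ) • (x - T x)),
    ⟨half_add_mem_eigenspace_one hS hx hTx, half_sub_mem_eigenspace_neg_one hS hx hTx, by module⟩,
    ?_⟩
  rintro ⟨p, q⟩ ⟨hp, hq, rfl⟩
  have hTp := Module.End.mem_eigenspace_iff.1 (Submodule.mem_inf.1 hp).2
  have hTq := Module.End.mem_eigenspace_iff.1 (Submodule.mem_inf.1 hq).2
  simp only [map_add, hTp, hTq, Prod.mk.injEq]
  constructor <;> module

end Involution

theorem sum_sum_wedge_mul_wedge {ι : Type*} [Fintype ι] (w a c : ι → ℝ) :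
    ∑ j, ∑ k, (w j * a k - w k * a j) * (w j * c k - w k * c j) =
      2 * (∑ j, w j * w j) * (∑ k, a k * c k) - 2 * (∑ j, w j * a j) * (∑ k, w k * c k) := by
  have expand : ∀ j k, (w j * a k - w k * a j) * (w j * c k - w k * c j) =
      w j * w j * (a k * c k) + a j * c j * (w k * w k) - w j * c j * (w k * a k) -
        w j * a j * (w k * c k) := fun j k => by ring
  simp only [expand, Finset.sum_add_distrib, Finset.sum_sub_distrib, ← Finset.mul_sum,
    ← Finset.sum_mul]
  ring

namespace ACM

variable {n : ℕ} {φ : V →ₗ[ℝ] V} {ξ : V} {η : V →ₗ[ℝ] ℝ}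

theorem eta_xi (h : ACM n φ ξ η) : η ξ = 1 := by
  obtain ⟨-, hφφ, hφξ, -, hξξ, -⟩ := h
  have := congrArg (⟪·, ξ⟫) (hφφ ξ)
  simp only [hφξ, map_zero, inner_zero_left, inner_add_left, inner_neg_left, real_inner_smul_left,
    hξξ] at this
  linarith

theorem eta_eq_inner (h : ACM n φ ξ η) (x : V) : η x = ⟪x, ξ⟫ := by
  have := h.2.2.2.2.2 x ξ
  rw [h.2.2.1, inner_zero_right, h.eta_xi] at this
  linarith

theorem hMap_eq (h : ACM n φ ξ η) (x : V) : hMap φ x = x - η x • ξ := by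
  rw [hMap, h.2.1 x]
  abel

theorem eta_hMap (h : ACM n φ ξ η) (x : V) : η (hMap φ x) = 0 := by
  rw [h.hMap_eq, map_sub, map_smul, h.eta_xi, smul_eq_mul, mul_one, sub_self]

theorem eta_symm_apply (h : ACM n φ ξ η) {A : V ≃ₗᵢ[ℝ] V} (hA : A ξ = ξ) (x : V) :
    η (A.symm x) = η x := by
  rw [h.eta_eq_inner, h.eta_eq_inner, ← A.inner_map_map, A.apply_symm_apply, hA]

theorem sum_eta_mul (h : ACM n φ ξ η) {ι : Type*} [Fintype ι] (e : OrthonormalBasis ι ℝ V)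
    {f : V → ℝ} (hf : IsLinearMap ℝ f) : ∑ j, η (e j) * f (e j) = f ξ := by
  have := map_sum (hf.mk' f) (fun j => ⟪e j, ξ⟫ • e j) Finset.univ
  simp only [IsLinearMap.mk'_apply, map_smul, smul_eq_mul, e.sum_repr'] at this
  simp only [this, h.eta_eq_inner]

end ACM

namespace Trilinear

variable {F G : V → V → V → ℝ}

theorem map_add₁ (hF : Trilinear F) (u v y z : V) : F (u + v) y z = F u y z + F v y z :=
  (hF.1 y z).map_add u v

theorem map_add₂ (hF : Trilinear F) (x u v z : V) : F x (u + v) z = F x u z + F x v z :=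
  (hF.2.1 x z).map_add u v

theorem map_add₃ (hF : Trilinear F) (x y u v : V) : F x y (u + v) = F x y u + F x y v :=
  (hF.2.2 x y).map_add u v

theorem map_smul₁ (hF : Trilinear F) (c : ℝ) (x y z : V) : F (c • x) y z = c * F x y z :=
  (hF.1 y z).map_smul c x

theorem map_smul₂ (hF : Trilinear F) (c : ℝ) (x y z : V) : F x (c • y) z = c * F x y z :=
  (hF.2.1 x z).map_smul c y

theorem map_smul₃ (hF : Trilinear F) (c : ℝ) (x y z : V) : F x y (c • z) = c * F x y z :=
  (hF.2.2 x y).map_smul c z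

theorem map_sub_smul₁ (hF : Trilinear F) (x v y z : V) (c : ℝ) :
    F (x - c • v) y z = F x y z - c * F v y z := by
  rw [sub_eq_add_neg, ← neg_smul, hF.map_add₁, hF.map_smul₁]; ring

theorem map_sub_smul₂ (hF : Trilinear F) (x y v z : V) (c : ℝ) :
    F x (y - c • v) z = F x y z - c * F x v z := by
  rw [sub_eq_add_neg, ← neg_smul, hF.map_add₂, hF.map_smul₂]; ring

theorem map_sub_smul₃ (hF : Trilinear F) (x y z v : V) (c : ℝ) :
    F x y (z - c • v) = F x y z - c * F x y v := by
  rw [sub_eq_add_neg, ← neg_smul, hF.map_add₃, hF.map_smul₃]; ring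

theorem map_zero₃ (hF : Trilinear F) (x y : V) : F x y 0 = 0 := by
  simpa using hF.map_smul₃ 0 x y 0

theorem zero : Trilinear (0 : V → V → V → ℝ) :=
  ⟨fun _ _ => ⟨fun _ _ => by simp, fun _ _ => by simp⟩,
    fun _ _ => ⟨fun _ _ => by simp, fun _ _ => by simp⟩,
    fun _ _ => ⟨fun _ _ => by simp, fun _ _ => by simp⟩⟩

theorem add (hF : Trilinear F) (hG : Trilinear G) : Trilinear (F + G) := by
  refine ⟨fun y z => ⟨?_, ?_⟩, fun x z => ⟨?_, ?_⟩, fun x y => ⟨?_, ?_⟩⟩ <;> intros <;>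
    simp only [Pi.add_apply, hF.map_add₁, hF.map_add₂, hF.map_add₃, hG.map_add₁, hG.map_add₂,
      hG.map_add₃, hF.map_smul₁, hF.map_smul₂, hF.map_smul₃, hG.map_smul₁, hG.map_smul₂,
      hG.map_smul₃, smul_eq_mul] <;> ring

theorem smul (hF : Trilinear F) (c : ℝ) : Trilinear (c • F) := by
  refine ⟨fun y z => ⟨?_, ?_⟩, fun x z => ⟨?_, ?_⟩, fun x y => ⟨?_, ?_⟩⟩ <;> intros <;>
    simp only [Pi.smul_apply, hF.map_add₁, hF.map_add₂, hF.map_add₃, hF.map_smul₁, hF.map_smul₂,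
      hF.map_smul₃, smul_eq_mul] <;> ring

end Trilinear

section VF'

variable {n : ℕ} {φ : V →ₗ[ℝ] V} {ξ : V} {η : V →ₗ[ℝ] ℝ} {F G : V → V → V → ℝ}

theorem trilinear_F5 (hF : Trilinear F) : Trilinear (F5 ξ η F) := by
  refine ⟨fun y z => ⟨?_, ?_⟩, fun x z => ⟨?_, ?_⟩, fun x y => ⟨?_, ?_⟩⟩ <;> intros <;>
    simp only [F5, map_add, map_smul, hF.map_add₁, hF.map_add₃, hF.map_smul₁, hF.map_smul₃,
      smul_eq_mul] <;> ring

variable (φ ξ η)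

def F4ₗ : Module.End ℝ (V → V → V → ℝ) where
  toFun := F4 φ ξ η
  map_add' F G := by funext x y z; simp only [F4, Pi.add_apply]; ring
  map_smul' c F := by
    funext x y z; simp only [F4, Pi.smul_apply, smul_eq_mul, RingHom.id_apply]; ring

def F5ₗ : Module.End ℝ (V → V → V → ℝ) where
  toFun := F5 ξ η
  map_add' F G := by funext x y z; simp only [F5, Pi.add_apply]; ring
  map_smul' c F := by
    funext x y z; simp only [F5, Pi.smul_apply, smul_eq_mul, RingHom.id_apply]; ring

@[simp] theorem F4ₗ_apply (F : V → V → V → ℝ) : F4ₗ φ ξ η F = F4 φ ξ η F := rfl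

@[simp] theorem F5ₗ_apply (F : V → V → V → ℝ) : F5ₗ ξ η F = F5 ξ η F := rfl

def vF' : Submodule ℝ (V → V → V → ℝ) where
  carrier := {F | MemVF' φ ξ η F}
  zero_mem' := ⟨⟨Trilinear.zero, fun _ _ _ => by simp, fun _ _ _ => by simp⟩, rfl, fun _ _ => rfl⟩
  add_mem' := by
    rintro F G ⟨⟨hFt, hFa, hFφ⟩, hFh, hFξ⟩ ⟨⟨hGt, hGa, hGφ⟩, hGh, hGξ⟩
    refine ⟨⟨hFt.add hGt, fun x y z => ?_, fun x y z => ?_⟩, ?_, fun y z => ?_⟩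
    · simp only [Pi.add_apply, hFa x y z, hGa x y z]; ring
    · simp only [Pi.add_apply, hFφ x y z, hGφ x y z]; ring
    · change hF φ F + hF φ G = 0
      rw [hFh, hGh, add_zero]
    · simp only [Pi.add_apply, hFξ, hGξ, add_zero]
  smul_mem' := by
    rintro c F ⟨⟨hFt, hFa, hFφ⟩, hFh, hFξ⟩
    refine ⟨⟨hFt.smul c, fun x y z => ?_, fun x y z => ?_⟩, ?_, fun y z => ?_⟩
    · simp only [Pi.smul_apply, smul_eq_mul, hFa x y z]; ring
    · simp only [Pi.smul_apply, smul_eq_mul, hFφ x y z]; ring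
    · change c • hF φ F = 0
      rw [hFh, smul_zero]
    · simp only [Pi.smul_apply, hFξ, smul_zero]

/-- `𝒩 = eigenF4 φ ξ η 1` and `𝒩̃ = eigenF4 φ ξ η (-1)`. -/
def eigenF4 (ε : ℝ) : Submodule ℝ (V → V → V → ℝ) :=
  vF' φ ξ η ⊓ (F4ₗ φ ξ η).eigenspace ε

variable {φ ξ η}

theorem memN_iff : MemN φ ξ η F ↔ F ∈ eigenF4 φ ξ η 1 := by
  rw [eigenF4, Submodule.mem_inf, ← eq_iff_mem_eigenspace_one]; rfl

theorem memNt_iff : MemNt φ ξ η F ↔ F ∈ eigenF4 φ ξ η (-1) := by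
  rw [eigenF4, Submodule.mem_inf, ← eq_neg_iff_mem_eigenspace_neg_one]; rfl

theorem memQS_iff : MemQS φ ξ η F ↔ F ∈ eigenF4 φ ξ η 1 ⊓ (F5ₗ ξ η).eigenspace 1 := by
  rw [Submodule.mem_inf, ← memN_iff, ← eq_iff_mem_eigenspace_one]; exact and_assoc.symm

theorem memQK_iff : MemQK φ ξ η F ↔ F ∈ eigenF4 φ ξ η 1 ⊓ (F5ₗ ξ η).eigenspace (-1) := by
  rw [Submodule.mem_inf, ← memN_iff, ← eq_neg_iff_mem_eigenspace_neg_one]; exact and_assoc.symm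

theorem memF6sub_iff :
    MemF6sub φ ξ η F ↔ F ∈ eigenF4 φ ξ η (-1) ⊓ (F5ₗ ξ η).eigenspace 1 := by
  rw [Submodule.mem_inf, ← memNt_iff, ← eq_iff_mem_eigenspace_one]; exact and_assoc.symm

theorem memF7sub_iff :
    MemF7sub φ ξ η F ↔ F ∈ eigenF4 φ ξ η (-1) ⊓ (F5ₗ ξ η).eigenspace (-1) := by
  rw [Submodule.mem_inf, ← memNt_iff, ← eq_neg_iff_mem_eigenspace_neg_one]; exact and_assoc.symm

theorem F2_eq_self (h : ACM n φ ξ η) (hFv : MemVF' φ ξ η F) : F2 ξ η F = F := by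
  obtain ⟨⟨hFt, hFa, -⟩, hFh, hFξ⟩ := hFv
  funext x y z
  have hξξ : F x ξ ξ = 0 := by linarith [hFa x ξ ξ]
  have := congrFun₃ hFh x y z
  simp only [hF, h.hMap_eq, hFt.map_sub_smul₁, hFt.map_sub_smul₂, hFt.map_sub_smul₃, hFξ,
    hξξ, hFa x y ξ, Pi.zero_apply] at this
  simp only [F2]
  linear_combination -this

theorem F5_apply_xi (h : ACM n φ ξ η) (hFξ : ∀ y z, F ξ y z = 0) (x z : V) :
    F5 ξ η F x ξ z = F z ξ x := by
  simp only [F5, h.eta_xi, hFξ, one_mul, mul_zero, sub_zero]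

theorem F5_mem_vF' (h : ACM n φ ξ η) (hFv : F ∈ vF' φ ξ η) : F5ₗ ξ η F ∈ vF' φ ξ η := by
  obtain ⟨⟨hFt, hFa, -⟩, -, hFξ⟩ := hFv
  have hξξ : ∀ x, F x ξ ξ = 0 := fun x => by linarith [hFa x ξ ξ]
  refine ⟨⟨trilinear_F5 hFt, fun x y z => ?_, fun x y z => ?_⟩, ?_, fun y z => ?_⟩
  · simp only [F5ₗ_apply, F5]; ring
  · simp only [F5ₗ_apply, F5, h.2.2.2.1, h.eta_xi, hFξ]; ring
  · funext x y z
    simp only [hF, F5ₗ_apply, F5, h.eta_hMap, Pi.zero_apply]; ring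
  · simp only [F5ₗ_apply, F5, hξξ]; ring

theorem F5_F5 (h : ACM n φ ξ η) (hF : MemVF' φ ξ η F) : F5 ξ η (F5 ξ η F) = F := by
  conv_rhs => rw [← F2_eq_self h hF]
  funext x y z
  simp only [F5, F2, h.eta_xi, hF.2.2]
  ring

section eigenF4

variable {ε : ℝ}

theorem apply_phi_xi_phi (h : ACM n φ ξ η) (hF : F ∈ eigenF4 φ ξ η ε) (x z : V) :
    F (φ x) ξ (φ z) = ε * F x ξ z := by
  obtain ⟨hFv, hF4⟩ := Submodule.mem_inf.1 hF
  have := congrFun₃ (Module.End.mem_eigenspace_iff.1 hF4) x ξ z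
  simpa [F4, h.eta_xi, h.2.2.1, hFv.1.1.map_zero₃] using this

theorem F5_mem_eigenF4 (h : ACM n φ ξ η) (hF : F ∈ eigenF4 φ ξ η ε) :
    F5ₗ ξ η F ∈ eigenF4 φ ξ η ε := by
  obtain ⟨hFv, -⟩ := Submodule.mem_inf.1 hF
  refine Submodule.mem_inf.2 ⟨F5_mem_vF' h hFv, Module.End.mem_eigenspace_iff.2 ?_⟩
  funext x y z
  simp only [F4ₗ_apply, F5ₗ_apply, F4, F5_apply_xi h hFv.2.2, Pi.smul_apply, smul_eq_mul]
  simp only [F5, apply_phi_xi_phi h hF]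
  ring

theorem F6_eq_smul_F5 (h : ACM n φ ξ η) (hF : F ∈ eigenF4 φ ξ η ε) :
    F6 φ ξ η F = ε • F5 ξ η F := by
  funext x y z
  simp only [F6, F5, apply_phi_xi_phi h hF, Pi.smul_apply, smul_eq_mul]
  ring

end eigenF4

theorem L5_eq_neg_F5 (F : V → V → V → ℝ) : L5 ξ η F = -F5ₗ ξ η F := rfl

theorem L5_L5 (h : ACM n φ ξ η) (hF : MemVF' φ ξ η F) : L5 ξ η (L5 ξ η F) = F := by
  rw [L5_eq_neg_F5, L5_eq_neg_F5, map_neg, neg_neg]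
  exact F5_F5 h hF

theorem L5_mem_eigenF4 (h : ACM n φ ξ η) {ε : ℝ} (hF : F ∈ eigenF4 φ ξ η ε) :
    L5 ξ η F ∈ eigenF4 φ ξ η ε :=
  neg_mem (F5_mem_eigenF4 h hF)

theorem L5_eq_neg_iff_mem {S : Submodule ℝ (V → V → V → ℝ)} (hF : F ∈ S) :
    L5 ξ η F = -F ↔ F ∈ S ⊓ (F5ₗ ξ η).eigenspace 1 := by
  rw [Submodule.mem_inf, ← eq_iff_mem_eigenspace_one, L5_eq_neg_F5, neg_inj, eq_comm]
  exact (and_iff_right hF).symm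

theorem L5_eq_self_iff_mem {S : Submodule ℝ (V → V → V → ℝ)} (hF : F ∈ S) :
    L5 ξ η F = F ↔ F ∈ S ⊓ (F5ₗ ξ η).eigenspace (-1) := by
  rw [Submodule.mem_inf, ← eq_neg_iff_mem_eigenspace_neg_one, L5_eq_neg_F5, eq_comm]
  exact (and_iff_right hF).symm

theorem L5_actA (h : ACM n φ ξ η) {A : V ≃ₗᵢ[ℝ] V} (hA : A ξ = ξ) (F : V → V → V → ℝ) :
    L5 ξ η (actA A F) = actA A (L5 ξ η F) := by
  have hAξ : A.symm ξ = ξ := A.symm_apply_eq.2 hA.symm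
  funext x y z
  simp only [L5, F5, actA, hAξ, h.eta_symm_apply hA]

section innerF

variable {ι : Type*} [Fintype ι]

theorem innerF_neg_left (e : OrthonormalBasis ι ℝ V) (F G : V → V → V → ℝ) :
    innerF e (-F) G = -innerF e F G := by
  simp only [innerF, Pi.neg_apply, neg_mul, Finset.sum_neg_distrib]

theorem innerF_eq_two_mul_sum_xi (h : ACM n φ ξ η) (e : OrthonormalBasis ι ℝ V)
    (hF : MemVF' φ ξ η F) (hG : MemVF' φ ξ η G) :
    innerF e F G = 2 * ∑ i, ∑ k, F (e i) ξ (e k) * G (e i) ξ (e k) := by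
  have hηη : ∑ j, η (e j) * η (e j) = 1 := by rw [h.sum_eta_mul e η.isLinear, h.eta_xi]
  have hξ : ∀ {F}, MemVF' φ ξ η F → ∀ x, ∑ j, η (e j) * F x ξ (e j) = 0 := fun hF x => by
    rw [h.sum_eta_mul e (hF.1.1.2.2 x ξ)]; linarith [hF.1.2.1 x ξ ξ]
  rw [innerF, Finset.mul_sum]
  refine Finset.sum_congr rfl fun i _ => ?_
  calc ∑ j, ∑ k, F (e i) (e j) (e k) * G (e i) (e j) (e k)
      = ∑ j, ∑ k, F2 ξ η F (e i) (e j) (e k) * F2 ξ η G (e i) (e j) (e k) := by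
        rw [F2_eq_self h hF, F2_eq_self h hG]
    _ = 2 * (∑ j, η (e j) * η (e j)) * (∑ k, F (e i) ξ (e k) * G (e i) ξ (e k)) -
          2 * (∑ j, η (e j) * F (e i) ξ (e j)) * (∑ k, η (e k) * G (e i) ξ (e k)) :=
        sum_sum_wedge_mul_wedge _ _ _
    _ = 2 * ∑ k, F (e i) ξ (e k) * G (e i) ξ (e k) := by rw [hηη, hξ hF, hξ hG]; ring

theorem innerF_L5_L5 (h : ACM n φ ξ η) (e : OrthonormalBasis ι ℝ V) (hF : MemVF' φ ξ η F)
    (hG : MemVF' φ ξ η G) : innerF e (L5 ξ η F) (L5 ξ η G) = innerF e F G := by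
  have hL5 : ∀ {F}, MemVF' φ ξ η F → MemVF' φ ξ η (L5 ξ η F) := fun hF =>
    (vF' φ ξ η).neg_mem (F5_mem_vF' h hF)
  have hL5ξ : ∀ {F}, MemVF' φ ξ η F → ∀ x z, L5 ξ η F x ξ z = -F z ξ x := fun hF x z => by
    rw [L5, F5_apply_xi h hF.2.2]
  rw [innerF_eq_two_mul_sum_xi h e (hL5 hF) (hL5 hG), innerF_eq_two_mul_sum_xi h e hF hG,
    Finset.sum_comm]
  simp only [hL5ξ hF, hL5ξ hG, neg_mul_neg]

theorem innerF_eq_zero_of_F5 (h : ACM n φ ξ η) (e : OrthonormalBasis ι ℝ V) (hF : MemVF' φ ξ η F)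
    (hG : MemVF' φ ξ η G) (hF5 : F = F5 ξ η F) (hG5 : G = -F5 ξ η G) : innerF e F G = 0 := by
  have hL5F : L5 ξ η F = -F := by rw [L5_eq_neg_F5, F5ₗ_apply, ← hF5]
  have hL5G : L5 ξ η G = G := hG5.symm
  have := innerF_L5_L5 h e hF hG
  rw [hL5F, hL5G, innerF_neg_left] at this
  linarith

end innerF

theorem MemN.projections (h : ACM n φ ξ η) (hN : MemN φ ξ η F) :
    MemQS φ ξ η (fun x y z => (1 / 4) * (F2 ξ η F x y z + F4 φ ξ η F x y z +
        F5 ξ η F x y z + F6 φ ξ η F x y z)) ∧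
      MemQK φ ξ η (fun x y z => (1 / 4) * (F2 ξ η F x y z + F4 φ ξ η F x y z -
        F5 ξ η F x y z - F6 φ ξ η F x y z)) ∧
      ∀ x y z, F x y z =
        (1 / 4) * (F2 ξ η F x y z + F4 φ ξ η F x y z + F5 ξ η F x y z + F6 φ ξ η F x y z) +
        (1 / 4) * (F2 ξ η F x y z + F4 φ ξ η F x y z - F5 ξ η F x y z - F6 φ ξ η F x y z) := by
  have hS := memN_iff.1 hN
  have hF2 := congrFun₃ (F2_eq_self h hN.1)
  have hF4 := congrFun₃ hN.2
  have hF6 := congrFun₃ (F6_eq_smul_F5 h hS)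
  simp only [Pi.smul_apply, smul_eq_mul, one_mul] at hF6
  refine ⟨memQS_iff.2 ?_, memQK_iff.2 ?_, fun x y z => ?_⟩
  · convert half_add_mem_eigenspace_one (fun _ => F5_mem_eigenF4 h) hS (F5_F5 h hN.1) using 1
    funext x y z
    simp only [Pi.smul_apply, Pi.add_apply, smul_eq_mul, F5ₗ_apply]
    linear_combination (1 / 4) * hF2 x y z - (1 / 4) * hF4 x y z + (1 / 4) * hF6 x y z
  · convert half_sub_mem_eigenspace_neg_one (fun _ => F5_mem_eigenF4 h) hS (F5_F5 h hN.1) using 1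
    funext x y z
    simp only [Pi.smul_apply, Pi.sub_apply, smul_eq_mul, F5ₗ_apply]
    linear_combination (1 / 4) * hF2 x y z - (1 / 4) * hF4 x y z - (1 / 4) * hF6 x y z
  · linear_combination -(1 / 2) * hF2 x y z + (1 / 2) * hF4 x y z

theorem MemNt.projections (h : ACM n φ ξ η) (hN : MemNt φ ξ η F) :
    MemF6sub φ ξ η (fun x y z => (1 / 4) * (F2 ξ η F x y z - F4 φ ξ η F x y z +
        F5 ξ η F x y z - F6 φ ξ η F x y z)) ∧
      MemF7sub φ ξ η (fun x y z => (1 / 4) * (F2 ξ η F x y z - F4 φ ξ η F x y z -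
        F5 ξ η F x y z + F6 φ ξ η F x y z)) ∧
      ∀ x y z, F x y z =
        (1 / 4) * (F2 ξ η F x y z - F4 φ ξ η F x y z + F5 ξ η F x y z - F6 φ ξ η F x y z) +
        (1 / 4) * (F2 ξ η F x y z - F4 φ ξ η F x y z - F5 ξ η F x y z + F6 φ ξ η F x y z) := by
  have hS := memNt_iff.1 hN
  have hF2 := congrFun₃ (F2_eq_self h hN.1)
  have hF4 := congrFun₃ hN.2
  have hF6 := congrFun₃ (F6_eq_smul_F5 h hS)
  simp only [Pi.neg_apply, Pi.smul_apply, smul_eq_mul, neg_one_mul] at hF4 hF6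
  refine ⟨memF6sub_iff.2 ?_, memF7sub_iff.2 ?_, fun x y z => ?_⟩
  · convert half_add_mem_eigenspace_one (fun _ => F5_mem_eigenF4 h) hS (F5_F5 h hN.1) using 1
    funext x y z
    simp only [Pi.smul_apply, Pi.add_apply, smul_eq_mul, F5ₗ_apply]
    linear_combination (1 / 4) * hF2 x y z - (1 / 4) * hF4 x y z - (1 / 4) * hF6 x y z
  · convert half_sub_mem_eigenspace_neg_one (fun _ => F5_mem_eigenF4 h) hS (F5_F5 h hN.1) using 1
    funext x y z
    simp only [Pi.smul_apply, Pi.sub_apply, smul_eq_mul, F5ₗ_apply]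
    linear_combination (1 / 4) * hF2 x y z - (1 / 4) * hF4 x y z + (1 / 4) * hF6 x y z
  · linear_combination -(1 / 2) * hF2 x y z + (1 / 2) * hF4 x y z

end VF'

theorem stmt13 (n : ℕ) (φ : V →ₗ[ℝ] V) (ξ : V) (η : V →ₗ[ℝ] ℝ)
    (hacm : ACM n φ ξ η) (e : OrthonormalBasis (Fin (2 * n + 1)) ℝ V) :
    (∀ F, MemN φ ξ η F → MemN φ ξ η (L5 ξ η F)) ∧
    (∀ F, MemNt φ ξ η F → MemNt φ ξ η (L5 ξ η F)) ∧
    (∀ (a : ℝ) (F G : V → V → V → ℝ),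
      L5 ξ η (fun x y z => a * F x y z + G x y z) =
        fun x y z => a * L5 ξ η F x y z + L5 ξ η G x y z) ∧
    (∀ F, MemN φ ξ η F → L5 ξ η (L5 ξ η F) = F) ∧
    (∀ F, MemNt φ ξ η F → L5 ξ η (L5 ξ η F) = F) ∧
    (∀ F G, MemN φ ξ η F → MemN φ ξ η G →
      innerF e (L5 ξ η F) (L5 ξ η G) = innerF e F G) ∧
    (∀ F G, MemNt φ ξ η F → MemNt φ ξ η G →
      innerF e (L5 ξ η F) (L5 ξ η G) = innerF e F G) ∧
    (∀ A : V ≃ₗᵢ[ℝ] V, (∀ x, A (φ x) = φ (A x)) → A ξ = ξ →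
      ∀ F, MemVF' φ ξ η F → L5 ξ η (actA A F) = actA A (L5 ξ η F)) ∧
    (∀ F, MemN φ ξ η F →
      (L5 ξ η F = -F ↔ MemQS φ ξ η F) ∧ (L5 ξ η F = F ↔ MemQK φ ξ η F)) ∧
    (∀ F, MemNt φ ξ η F →
      (L5 ξ η F = -F ↔ MemF6sub φ ξ η F) ∧ (L5 ξ η F = F ↔ MemF7sub φ ξ η F)) ∧
    (∀ F, MemN φ ξ η F →
      MemQS φ ξ η (fun x y z => (1 / 4) * (F2 ξ η F x y z + F4 φ ξ η F x y z +
        F5 ξ η F x y z + F6 φ ξ η F x y z)) ∧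
      MemQK φ ξ η (fun x y z => (1 / 4) * (F2 ξ η F x y z + F4 φ ξ η F x y z -
        F5 ξ η F x y z - F6 φ ξ η F x y z)) ∧
      ∀ x y z, F x y z =
        (1 / 4) * (F2 ξ η F x y z + F4 φ ξ η F x y z +
          F5 ξ η F x y z + F6 φ ξ η F x y z) +
        (1 / 4) * (F2 ξ η F x y z + F4 φ ξ η F x y z -
          F5 ξ η F x y z - F6 φ ξ η F x y z)) ∧
    (∀ F, MemNt φ ξ η F →
      MemF6sub φ ξ η (fun x y z => (1 / 4) * (F2 ξ η F x y z - F4 φ ξ η F x y z +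
        F5 ξ η F x y z - F6 φ ξ η F x y z)) ∧
      MemF7sub φ ξ η (fun x y z => (1 / 4) * (F2 ξ η F x y z - F4 φ ξ η F x y z -
        F5 ξ η F x y z + F6 φ ξ η F x y z)) ∧
      ∀ x y z, F x y z =
        (1 / 4) * (F2 ξ η F x y z - F4 φ ξ η F x y z +
          F5 ξ η F x y z - F6 φ ξ η F x y z) +
        (1 / 4) * (F2 ξ η F x y z - F4 φ ξ η F x y z -
          F5 ξ η F x y z + F6 φ ξ η F x y z)) ∧
    (∀ F, MemN φ ξ η F →
      ∃! p : (V → V → V → ℝ) × (V → V → V → ℝ),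
        MemQS φ ξ η p.1 ∧ MemQK φ ξ η p.2 ∧ F = p.1 + p.2) ∧
    (∀ F, MemNt φ ξ η F →
      ∃! p : (V → V → V → ℝ) × (V → V → V → ℝ),
        MemF6sub φ ξ η p.1 ∧ MemF7sub φ ξ η p.2 ∧ F = p.1 + p.2) ∧
    (∀ F G, MemQS φ ξ η F → MemQK φ ξ η G → innerF e F G = 0) ∧
    (∀ F G, MemF6sub φ ξ η F → MemF7sub φ ξ η G → innerF e F G = 0) := by
  refine ⟨fun F hF => memN_iff.2 (L5_mem_eigenF4 hacm (memN_iff.1 hF)),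
    fun F hF => memNt_iff.2 (L5_mem_eigenF4 hacm (memNt_iff.1 hF)),
    fun a F G => by funext x y z; simp only [L5, F5]; ring,
    fun F hF => L5_L5 hacm hF.1, fun F hF => L5_L5 hacm hF.1,
    fun F G hF hG => innerF_L5_L5 hacm e hF.1 hG.1,
    fun F G hF hG => innerF_L5_L5 hacm e hF.1 hG.1,
    fun A _ hA F _ => L5_actA hacm hA F,
    fun F hF => ⟨(L5_eq_neg_iff_mem (memN_iff.1 hF)).trans memQS_iff.symm,
      (L5_eq_self_iff_mem (memN_iff.1 hF)).trans memQK_iff.symm⟩,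
    fun F hF => ⟨(L5_eq_neg_iff_mem (memNt_iff.1 hF)).trans memF6sub_iff.symm,
      (L5_eq_self_iff_mem (memNt_iff.1 hF)).trans memF7sub_iff.symm⟩,
    fun F hF => hF.projections hacm, fun F hF => hF.projections hacm,
    fun F hF => ?_, fun F hF => ?_,
    fun F G hF hG => innerF_eq_zero_of_F5 hacm e hF.1 hG.1 hF.2.2 hG.2.2,
    fun F G hF hG => innerF_eq_zero_of_F5 hacm e hF.1 hG.1 hF.2.2 hG.2.2⟩
  · simpa only [memQS_iff, memQK_iff] using existsUnique_add_mem_eigenspaces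
      (fun _ => F5_mem_eigenF4 hacm) (memN_iff.1 hF) (F5_F5 hacm hF.1)
  · simpa only [memF6sub_iff, memF7sub_iff] using existsUnique_add_mem_eigenspaces
      (fun _ => F5_mem_eigenF4 hacm) (memNt_iff.1 hF) (F5_F5 hacm hF.1)
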